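/- arXiv:2603.13914 — 4 statements merged into one kernel-verified Lean document; each statement's English description precedes it below -/
import Mathlib

section
/- Any sequence possessing the Array Orthogonality Property is a perfect sequence, i.e., its periodic autocorrelation θ_s(τ) = Σ_{i=0}^{RC-1} s_i · conj(s_{i+τ}) (indices mod RC) vanishes for all τ ≢ 0 (mod RC). -/
/-- Periodic autocorrelation of a length-`L` sequence. -/
noncomputable def acorr (L : ℕ) (s : ℕ → ℂ) (τ : ℕ) : ℂ :=
  ∑ i ∈ Finset.range L, s i * (starRingEnd ℂ) (s ((i + τ) % L))

/-- Periodic cross-correlation of two length-`R` sequences. -/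
noncomputable def xcorr (R : ℕ) (a b : ℕ → ℂ) (τ : ℕ) : ℂ :=
  ∑ i ∈ Finset.range R, a i * (starRingEnd ℂ) (b ((i + τ) % R))

/-- The Array Orthogonality Property for an `R × C` array `S`:
(1) any two distinct columns are mutually orthogonal under cyclic cross-correlation;
(2) the columns form a periodic complementary set. -/
def AOP (R C : ℕ) (S : ℕ → ℕ → ℂ) : Prop :=
  (∀ τ j₀ j₁ : ℕ, j₀ < C → j₁ < C → j₀ ≠ j₁ →
      xcorr R (fun i => S i j₀) (fun i => S i j₁) τ = 0) ∧
  (∀ τ : ℕ, ¬ (R ∣ τ) →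
      ∑ j ∈ Finset.range C, xcorr R (fun i => S i j) (fun i => S i j) τ = 0)

lemma sum_range_mul_decomp {M : Type*} [AddCommMonoid M] (R C : ℕ) (f : ℕ → M) :
    ∑ i ∈ Finset.range (R * C), f i
      = ∑ j ∈ Finset.range C, ∑ q ∈ Finset.range R, f (q * C + j) := by
  have h : ∑ i ∈ Finset.range (R * C), f i
      = ∑ p ∈ Finset.range R ×ˢ Finset.range C, f (p.1 * C + p.2) := by
    apply Finset.sum_nbij' (i := fun i => (i / C, i % C)) (j := fun p => p.1 * C + p.2)
    · intro i hi
      simp only [Finset.mem_range] at hi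
      rcases Nat.eq_zero_or_pos C with rfl | hC
      · simp at hi
      simp only [Finset.mem_product, Finset.mem_range]
      exact ⟨(Nat.div_lt_iff_lt_mul hC).mpr hi, Nat.mod_lt _ hC⟩
    · rintro ⟨q, j⟩ hp
      simp only [Finset.mem_product, Finset.mem_range] at hp ⊢
      calc q * C + j < q * C + C := by omega
        _ = (q + 1) * C := by ring
        _ ≤ R * C := Nat.mul_le_mul_right _ (by omega)
    · intro i _
      exact Nat.div_add_mod' i C
    · rintro ⟨q, j⟩ hp
      simp only [Finset.mem_product, Finset.mem_range] at hp
      have hC : 0 < C := by omega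
      have hd : (q * C + j) / C = q := by
        rw [Nat.add_comm, Nat.add_mul_div_right _ _ hC, Nat.div_eq_of_lt hp.2, Nat.zero_add]
      have hm : (q * C + j) % C = j := by
        rw [Nat.add_comm, Nat.add_mul_mod_self_right, Nat.mod_eq_of_lt hp.2]
      simp [hd, hm]
    · intro i _
      rw [Nat.div_add_mod']
  rw [h, Finset.sum_product, Finset.sum_comm]

lemma mod_mul_decomp (R C m r : ℕ) (hR : 0 < R) (hr : r < C) :
    (m * C + r) % (R * C) = (m % R) * C + r := by
  conv_lhs => rw [show m = R * (m / R) + m % R from (Nat.div_add_mod m R).symm]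
  have h : (R * (m / R) + m % R) * C + r = ((m % R) * C + r) + (m / R) * (R * C) := by ring
  rw [h, Nat.add_mul_mod_self_right, Nat.mod_eq_of_lt]
  have hle : m % R + 1 ≤ R := Nat.mod_lt _ hR
  calc (m % R) * C + r < (m % R) * C + C := by omega
    _ = (m % R + 1) * C := by ring
    _ ≤ R * C := Nat.mul_le_mul_right _ hle

/-- Any sequence possessing the Array Orthogonality Property is perfect. -/
theorem aop_implies_perfect (R C : ℕ) (hR : 0 < R) (hC : 0 < C) (s : ℕ → ℂ)
    (hAOP : AOP R C (fun i j => s (i * C + j))) :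
    ∀ τ : ℕ, ¬ ((R * C) ∣ τ) → acorr (R * C) s τ = 0 := by
  intro τ hτ
  set a := τ / C with ha
  set b := τ % C with hb
  have hbC : b < C := Nat.mod_lt _ hC
  have hτeq : τ = a * C + b := by
    rw [ha, hb, Nat.mul_comm]; exact (Nat.div_add_mod τ C).symm
  have key : acorr (R * C) s τ
      = ∑ j ∈ Finset.range C,
          xcorr R (fun i => s (i * C + j)) (fun i => s (i * C + (j + b) % C))
            (a + (j + b) / C) := by
    rw [acorr, sum_range_mul_decomp]
    apply Finset.sum_congr rfl
    intro j hj
    simp only [Finset.mem_range] at hj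
    rw [xcorr]
    apply Finset.sum_congr rfl
    intro q hq
    congr 2
    have hstep : q * C + j + τ = (q + (a + (j + b) / C)) * C + (j + b) % C := by
      calc q * C + j + τ = q * C + a * C + (j + b) := by rw [hτeq]; ring
        _ = q * C + a * C + ((j + b) / C * C + (j + b) % C) := by rw [Nat.div_add_mod']
        _ = (q + (a + (j + b) / C)) * C + (j + b) % C := by ring
    rw [hstep, mod_mul_decomp R C _ _ hR (Nat.mod_lt _ hC)]
  rw [key]
  by_cases hb0 : b = 0
  · have haR : ¬ R ∣ a := by
      rintro ⟨k, hk⟩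
      exact hτ ⟨k, by rw [show τ = a * C from by omega, hk]; ring⟩
    have heq : ∀ j ∈ Finset.range C,
        xcorr R (fun i => s (i * C + j)) (fun i => s (i * C + (j + b) % C))
          (a + (j + b) / C)
        = xcorr R (fun i => s (i * C + j)) (fun i => s (i * C + j)) a := by
      intro j hj
      simp only [Finset.mem_range] at hj
      have h1 : (j + b) % C = j := by rw [hb0]; simpa using Nat.mod_eq_of_lt hj
      have h2 : (j + b) / C = 0 := by rw [hb0]; simpa using Nat.div_eq_of_lt hj
      rw [h1, h2, Nat.add_zero]
    rw [Finset.sum_congr rfl heq]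
    exact hAOP.2 a haR
  · apply Finset.sum_eq_zero
    intro j hj
    simp only [Finset.mem_range] at hj
    apply hAOP.1
    · exact hj
    · exact Nat.mod_lt _ hC
    · intro h
      rcases Nat.lt_or_ge (j + b) C with h' | h'
      · rw [Nat.mod_eq_of_lt h'] at h; omega
      · have hm : (j + b) % C = j + b - C := by
          rw [Nat.mod_eq_sub_mod h', Nat.mod_eq_of_lt (by omega)]
        rw [hm] at h; omega
end

section
/- If a sequence s of length R·C has the Array Orthogonality Property for divisor C, then the associated R × C array S (with S_{i,j} = s_{iC+j}) has perfect two-dimensional periodic autocorrelation: θ_S(v,h) = Σ_{i=0}^{R-1} Σ_{j=0}^{C-1} S_{i,j}·conj(S_{(i+v) mod R, (j+h) mod C}) = 0 for every (v,h) ≢ (0,0) (mod (R,C)). -/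
/-- Two-dimensional periodic autocorrelation of an `R × C` array. -/
noncomputable def acorr2 (R C : ℕ) (S : ℕ → ℕ → ℂ) (v h : ℕ) : ℂ :=
  ∑ i ∈ Finset.range R, ∑ j ∈ Finset.range C,
    S i j * (starRingEnd ℂ) (S ((i + v) % R) ((j + h) % C))

/-- If a sequence of length `R·C` has the AOP for divisor `C`, then the associated
`R × C` array has perfect two-dimensional periodic autocorrelation. -/
theorem aop_implies_perfect_array (R C : ℕ) (hR : 0 < R) (hC : 0 < C) (s : ℕ → ℂ)
    (hAOP : AOP R C (fun i j => s (i * C + j))) :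
    ∀ v h : ℕ, ¬ (R ∣ v ∧ C ∣ h) →
      acorr2 R C (fun i j => s (i * C + j)) v h = 0 := by
  intro v h hvh
  set S : ℕ → ℕ → ℂ := fun i j => s (i * C + j) with hS
  have key : acorr2 R C S v h =
      ∑ j ∈ Finset.range C, xcorr R (fun i => S i j) (fun i => S i ((j + h) % C)) v := by
    unfold acorr2 xcorr
    rw [Finset.sum_comm]
  rw [key]
  by_cases hCh : C ∣ h
  · have hv : ¬ R ∣ v := fun hRv => hvh ⟨hRv, hCh⟩
    have h2 := hAOP.2 v hv
    rw [← h2]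
    apply Finset.sum_congr rfl
    intro j hj
    have hj' : j < C := Finset.mem_range.mp hj
    obtain ⟨k, rfl⟩ := hCh
    have : (j + C * k) % C = j := by
      rw [Nat.add_mul_mod_self_left, Nat.mod_eq_of_lt hj']
    rw [this]
  · apply Finset.sum_eq_zero
    intro j hj
    have hj' : j < C := Finset.mem_range.mp hj
    have hlt : (j + h) % C < C := Nat.mod_lt _ hC
    have hne : j ≠ (j + h) % C := by
      intro heq
      apply hCh
      have : (j + h) % C = (j + 0) % C := by
        rw [← heq, Nat.add_zero, Nat.mod_eq_of_lt hj']
      have := (Nat.ModEq.add_left_cancel' j this.symm)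
      simpa [Nat.modEq_zero_iff_dvd] using this.symm
    exact hAOP.1 v j ((j + h) % C) hj' hlt hne
end

section
/- If S is a perfect R × C complex array, then the length-C sequence c defined by c_j = Σ_{i=0}^{R-1} S_{i,j} is a perfect sequence with θ_c(0) = θ_S(0,0). -/
lemma sum_mod_shift (R : ℕ) (hR : 0 < R) (i : ℕ) (f : ℕ → ℂ) :
    ∑ v ∈ Finset.range R, f ((i + v) % R) = ∑ k ∈ Finset.range R, f k := by
  have key : ∀ a < R, (i + a + (R - i % R)) % R = a := by
    intro a ha
    have h1 : i % R < R := Nat.mod_lt _ hR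
    have h2 := Nat.div_add_mod i R
    have h3 : i + a + (R - i % R) = a + R * (i / R + 1) := by
      rw [Nat.mul_add, Nat.mul_one]; omega
    rw [h3, Nat.add_mul_mod_self_left, Nat.mod_eq_of_lt ha]
  apply Finset.sum_nbij' (i := fun v => (i + v) % R) (j := fun k => (k + (R - i % R)) % R)
  · intro a ha; exact Finset.mem_range.mpr (Nat.mod_lt _ hR)
  · intro a ha; exact Finset.mem_range.mpr (Nat.mod_lt _ hR)
  · intro a ha
    rw [Nat.mod_add_mod]
    exact key a (Finset.mem_range.mp ha)
  · intro a ha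
    rw [Nat.add_mod_mod, ← Nat.add_assoc]
    exact key a (Finset.mem_range.mp ha)
  · intro a ha; rfl

lemma acorr_eq_sum_acorr2 (R C : ℕ) (hR : 0 < R) (S : ℕ → ℕ → ℂ)
    (c : ℕ → ℂ) (hc : ∀ j, c j = ∑ i ∈ Finset.range R, S i j) (τ : ℕ) :
    acorr C c τ = ∑ v ∈ Finset.range R, acorr2 R C S v τ := by
  have L : acorr C c τ = ∑ i ∈ Finset.range R, ∑ j ∈ Finset.range C,
      ∑ k ∈ Finset.range R, S i j * (starRingEnd ℂ) (S k ((j + τ) % C)) := by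
    unfold acorr
    simp only [hc, map_sum, Finset.sum_mul, Finset.mul_sum]
    conv_lhs => enter [2, j]; rw [Finset.sum_comm]
    apply Finset.sum_comm
  have Rh : ∑ v ∈ Finset.range R, acorr2 R C S v τ = ∑ i ∈ Finset.range R,
      ∑ j ∈ Finset.range C, ∑ v ∈ Finset.range R,
      S i j * (starRingEnd ℂ) (S ((i + v) % R) ((j + τ) % C)) := by
    unfold acorr2
    rw [Finset.sum_comm]
    exact Finset.sum_congr rfl fun i _ => Finset.sum_comm
  rw [L, Rh]
  refine Finset.sum_congr rfl fun i _ => Finset.sum_congr rfl fun j _ => ?_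
  exact (sum_mod_shift R hR i
    (fun k => S i j * (starRingEnd ℂ) (S k ((j + τ) % C)))).symm

/-- If `S` is a perfect `R × C` complex array, then the row-sum sequence
`c_j = Σ_i S_{i,j}` is a perfect sequence with `θ_c(0) = θ_S(0,0)`. -/
theorem perfect_array_row_sum (R C : ℕ) (hR : 0 < R) (hC : 0 < C)
    (S : ℕ → ℕ → ℂ)
    (hS : ∀ v h : ℕ, ¬ (R ∣ v ∧ C ∣ h) → acorr2 R C S v h = 0)
    (c : ℕ → ℂ) (hc : ∀ j, c j = ∑ i ∈ Finset.range R, S i j) :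
    (∀ τ : ℕ, ¬ (C ∣ τ) → acorr C c τ = 0) ∧ acorr C c 0 = acorr2 R C S 0 0 := by
  have key := acorr_eq_sum_acorr2 R C hR S c hc
  constructor
  · intro τ hτ
    rw [key τ]
    exact Finset.sum_eq_zero fun v _ => hS v τ (fun h => hτ h.2)
  · rw [key 0]
    rw [Finset.sum_eq_single 0]
    · intro v hv hv0
      exact hS v 0 (fun h => hv0 (Nat.eq_zero_of_dvd_of_lt h.1 (Finset.mem_range.mp hv)))
    · intro h; exact absurd (Finset.mem_range.mpr hR) h
end

section
/- Let s be a sequence of length L = R·C over n-th roots of unity with array entries S_{i,j} = ω^{p(i,j)}, ω = e^{2πi/n}, p ∈ ℤ[x,y]. If s possesses the Array Orthogonality Property for divisor C, then L ≤ n². -/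
open Finset ComplexConjugate

theorem Finset.sum_range_add_mod {M : Type*} [AddCommMonoid M] {R : ℕ} (hR : 0 < R)
    (f : ℕ → M) (i : ℕ) : ∑ τ ∈ range R, f ((i + τ) % R) = ∑ τ ∈ range R, f τ := by
  have : NeZero R := ⟨hR.ne'⟩
  rw [← Fin.sum_univ_eq_sum_range (fun τ => f ((i + τ) % R)), ← Fin.sum_univ_eq_sum_range]
  refine Fintype.sum_equiv (Equiv.addLeft (Fin.ofNat R i)) _ _ fun τ => ?_
  simp [Fin.val_add]

theorem Finset.eq_zero_of_forall_sum_mul_pow_eq_zero {K ι : Type*} [CommRing K] [IsDomain K]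
    {Z : Finset ι} {x w : ι → K} (hx : Set.InjOn x Z)
    (h : ∀ k < #Z, ∑ t ∈ Z, w t * x t ^ k = 0) : ∀ s ∈ Z, w s = 0 := by
  intro s hs
  let e := Z.equivFin
  have hv : (fun i => w (e.symm i)) = 0 := by
    refine Matrix.eq_zero_of_forall_pow_sum_mul_pow_eq_zero (f := fun i => x (e.symm i))
      (fun i j hij => e.symm.injective (Subtype.ext (hx (e.symm i).2 (e.symm j).2 hij)))
      fun k => ?_
    rw [← h k k.2, ← Finset.sum_coe_sort Z]
    exact e.symm.sum_comp (fun t : Z => w t * x t ^ (k : ℕ))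
  simpa using congrFun hv (e ⟨s, hs⟩)

theorem xcorr_eq_of_shift_eq {R τ : ℕ} {a b : ℕ → ℂ} (ha : ∀ i, ‖a i‖ = 1)
    (hab : ∀ i < R, b ((i + τ) % R) = a i) : xcorr R a b τ = R := by
  rw [xcorr, Finset.sum_congr rfl fun i hi => by
    rw [hab i (mem_range.mp hi), Complex.mul_conj', ha, Complex.ofReal_one, one_pow]]
  simp

noncomputable def dft (R : ℕ) (ζ : ℂ) (a : ℕ → ℂ) (t : ℕ) : ℂ :=
  ∑ i ∈ range R, a i * (ζ ^ t) ^ i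

theorem sum_conj_pow_mul_xcorr {R : ℕ} (hR : 0 < R) {ζ : ℂ} (hζR : ζ ^ R = 1) (hζ : ‖ζ‖ = 1)
    (a b : ℕ → ℂ) (t : ℕ) :
    ∑ τ ∈ range R, conj ((ζ ^ t) ^ τ) * xcorr R a b τ = dft R ζ a t * conj (dft R ζ b t) := by
  set η := ζ ^ t
  have hshift : ∀ i τ, conj (η ^ τ) = η ^ i * conj (η ^ ((i + τ) % R)) := fun i τ => by
    rw [← pow_eq_pow_mod _ (by rw [← pow_mul, mul_comm, pow_mul, hζR, one_pow]), pow_add,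
      map_mul, ← mul_assoc, Complex.mul_conj', norm_pow, norm_pow, hζ, one_pow, one_pow,
      Complex.ofReal_one, one_pow, one_mul]
  calc ∑ τ ∈ range R, conj (η ^ τ) * xcorr R a b τ
      = ∑ i ∈ range R, a i * η ^ i *
          ∑ τ ∈ range R, (fun k => conj (b k * η ^ k)) ((i + τ) % R) := by
        simp_rw [xcorr, mul_sum]
        rw [sum_comm]
        refine sum_congr rfl fun i _ => sum_congr rfl fun τ _ => ?_
        rw [hshift i τ, map_mul]
        ring
    _ = dft R ζ a t * conj (dft R ζ b t) := by
        rw [dft, dft, map_sum, sum_mul]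
        exact sum_congr rfl fun i _ => by
          rw [sum_range_add_mod hR (fun k => conj (b k * η ^ k)) i]

section PrimitiveRoot

variable {R : ℕ} {ζ : ℂ}

theorem IsPrimitiveRoot.sum_pow_pow_mul_conj (hζ : IsPrimitiveRoot ζ R) {k i : ℕ} (hk : k < R)
    (hi : i < R) :
    ∑ t ∈ range R, (ζ ^ t) ^ k * conj ((ζ ^ t) ^ i) = if k = i then (R : ℂ) else 0 := by
  have hR : R ≠ 0 := by omega
  have hnorm : ‖ζ‖ = 1 := hζ.norm'_eq_one hR
  set μ := ζ ^ k * conj (ζ ^ i)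
  have hμ : ∀ t, (ζ ^ t) ^ k * conj ((ζ ^ t) ^ i) = μ ^ t := fun t => by
    rw [← pow_mul, ← pow_mul, mul_comm t k, mul_comm t i, pow_mul, pow_mul, map_pow, ← mul_pow]
  have hconj : conj (ζ ^ i) = (ζ ^ i)⁻¹ := by
    rw [Complex.inv_eq_conj (by rw [norm_pow, hnorm, one_pow])]
  simp_rw [hμ]
  split_ifs with hki
  · simp [μ, hki, hconj, pow_ne_zero i (hζ.ne_zero hR)]
  · have hμ1 : μ ≠ 1 := fun h => hki (hζ.pow_inj hk hi (by
      rwa [← mul_inv_eq_one₀ (pow_ne_zero i (hζ.ne_zero hR)), ← hconj]))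
    rw [geom_sum_eq hμ1, mul_pow, ← map_pow, ← pow_mul, ← pow_mul, mul_comm k, mul_comm i,
      pow_mul, pow_mul, hζ.pow_eq_one, one_pow, one_pow, map_one, mul_one, sub_self, zero_div]

theorem IsPrimitiveRoot.sum_dft_mul_conj_pow (hζ : IsPrimitiveRoot ζ R) (a : ℕ → ℂ) {i : ℕ}
    (hi : i < R) : ∑ t ∈ range R, dft R ζ a t * conj ((ζ ^ t) ^ i) = R * a i := by
  simp_rw [dft, sum_mul, mul_assoc]
  rw [sum_comm]
  simp_rw [← mul_sum]
  rw [sum_eq_single_of_mem i (mem_range.mpr hi) fun k hk hki => by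
    rw [hζ.sum_pow_pow_mul_conj (mem_range.mp hk) hi, if_neg hki, mul_zero]]
  rw [hζ.sum_pow_pow_mul_conj hi hi, if_pos rfl, mul_comm]

theorem IsPrimitiveRoot.sum_dft_mul_conj_dft (hζ : IsPrimitiveRoot ζ R) (a : ℕ → ℂ) :
    ∑ t ∈ range R, dft R ζ a t * conj (dft R ζ a t) = R * ∑ i ∈ range R, a i * conj (a i) := by
  conv_lhs => enter [2, t, 2]; rw [dft, map_sum]
  simp_rw [mul_sum, map_mul]
  rw [sum_comm]
  refine sum_congr rfl fun i hi => ?_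
  rw [← mul_assoc, ← hζ.sum_dft_mul_conj_pow a (mem_range.mp hi), sum_mul]
  exact sum_congr rfl fun t _ => by ring

theorem IsPrimitiveRoot.sub_lt_card_dft_ne_zero (hζ : IsPrimitiveRoot ζ R) {a : ℕ → ℂ} {n t₀ : ℕ}
    (ha : ∀ i, i + n < R → a (i + n) = a i) (ht₀ : t₀ < R) (hF : dft R ζ a t₀ ≠ 0)
    (hζn : (ζ ^ t₀) ^ n ≠ 1) : R - n < #{t ∈ range R | dft R ζ a t ≠ 0} := by
  by_contra! hcard
  set Z := {t ∈ range R | dft R ζ a t ≠ 0}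
  have hZ : ∀ i < R, ∑ t ∈ Z, dft R ζ a t * conj (ζ ^ t) ^ i = R * a i := fun i hi => by
    simp_rw [← map_pow]
    rw [← hζ.sum_dft_mul_conj_pow a hi]
    exact sum_filter_of_ne (p := fun t => dft R ζ a t ≠ 0) fun t _ h => left_ne_zero_of_mul h
  -- `R * a i` is the power sum `∑ F t * x_t ^ i` over the support, with distinct nodes
  -- `x_t = conj (ζ ^ t)`; the period-`n` relation then kills the weights `F t * (x_t ^ n - 1)`.
  have hkill := eq_zero_of_forall_sum_mul_pow_eq_zero (Z := Z) (x := fun t => conj (ζ ^ t))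
    (w := fun t => dft R ζ a t * (conj (ζ ^ t) ^ n - 1))
    (fun s hs t ht hst => hζ.pow_inj (mem_range.mp (mem_filter.mp hs).1)
      (mem_range.mp (mem_filter.mp ht).1) ((starRingEnd ℂ).injective hst))
    fun k hk => by
      have hkn : k + n < R := by omega
      calc ∑ t ∈ Z, dft R ζ a t * (conj (ζ ^ t) ^ n - 1) * conj (ζ ^ t) ^ k
          = ∑ t ∈ Z, dft R ζ a t * conj (ζ ^ t) ^ (k + n)
              - ∑ t ∈ Z, dft R ζ a t * conj (ζ ^ t) ^ k := by
            rw [← sum_sub_distrib]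
            exact sum_congr rfl fun t _ => by ring
        _ = 0 := by rw [hZ _ hkn, hZ _ (by omega), ha k hkn, sub_self]
  refine mul_ne_zero hF (sub_ne_zero.mpr ?_) (hkill t₀ (mem_filter.mpr ⟨mem_range.mpr ht₀, hF⟩))
  rwa [← map_pow, ← map_one (starRingEnd ℂ), (starRingEnd ℂ).injective.ne_iff]

end PrimitiveRoot

theorem norm_xcorr_sub_le {R n : ℕ} (hn : n ≤ R) {a : ℕ → ℂ} (ha₁ : ∀ i, ‖a i‖ = 1)
    (ha : ∀ i, i + n < R → a (i + n) = a i) : ‖xcorr R a a n - (R - n : ℕ)‖ ≤ n := by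
  have hhead : ∑ i ∈ range (R - n), a i * conj (a ((i + n) % R)) = (R - n : ℕ) := by
    rw [sum_congr rfl fun i hi => by
      have hi : i + n < R := by have := mem_range.mp hi; omega
      rw [Nat.mod_eq_of_lt hi, ha i hi, Complex.mul_conj', ha₁, Complex.ofReal_one, one_pow]]
    simp
  rw [xcorr, range_eq_Ico, ← sum_Ico_consecutive _ (Nat.zero_le (R - n)) (Nat.sub_le R n),
    ← range_eq_Ico, hhead, add_sub_cancel_left]
  calc ‖∑ i ∈ Ico (R - n) R, a i * conj (a ((i + n) % R))‖
      ≤ ∑ i ∈ Ico (R - n) R, (1 : ℝ) :=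
        norm_sum_le_of_le _ fun i _ => by rw [norm_mul, Complex.norm_conj, ha₁, ha₁, one_mul]
    _ = n := by simp [Nat.sub_sub_self hn]

namespace AOP

variable {R C n : ℕ} {S : ℕ → ℕ → ℂ} {ζ : ℂ}

theorem cols_le_of_periodic (h : AOP R C S) (hR : 0 < R) (hn : 0 < n) (hS : ∀ i j, ‖S i j‖ = 1)
    (hcol : ∀ i, Function.Periodic (S i) n) : C ≤ n := by
  by_contra! hnC
  have h0 := h.1 0 0 n (by omega) hnC hn.ne
  rw [xcorr_eq_of_shift_eq (fun i => hS i 0) fun i hi => by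
    simpa [Nat.mod_eq_of_lt hi] using hcol i 0] at h0
  exact (Nat.cast_ne_zero.mpr hR.ne') h0

theorem sum_xcorr_self_zero (hS : ∀ i j, ‖S i j‖ = 1) :
    ∑ j ∈ range C, xcorr R (fun i => S i j) (fun i => S i j) 0 = R * C := by
  rw [sum_congr rfl fun j _ => xcorr_eq_of_shift_eq (fun i => hS i j) fun i hi => by
    rw [add_zero, Nat.mod_eq_of_lt hi]]
  simp [mul_comm]

theorem not_dvd_of_lt (h : AOP R C S) (hC : 0 < C) (hS : ∀ i j, ‖S i j‖ = 1)
    (hrow : ∀ j, Function.Periodic (fun i => S i j) n) (hnR : n < R) : ¬ n ∣ R := by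
  intro hdvd
  have hn : 0 < n := Nat.pos_of_dvd_of_pos hdvd (by omega)
  have h0 := h.2 n (Nat.not_dvd_of_pos_of_lt hn hnR)
  rw [sum_congr rfl fun j _ => xcorr_eq_of_shift_eq (fun i => hS i j) fun i _ => by
    rw [← (hrow j).map_mod_nat, Nat.mod_mod_of_dvd _ hdvd, (hrow j).map_mod_nat]
    exact hrow j i] at h0
  simp only [sum_const, card_range, nsmul_eq_mul, mul_eq_zero, Nat.cast_eq_zero] at h0
  omega

theorem le_two_mul (h : AOP R C S) (hC : 0 < C) (hS : ∀ i j, ‖S i j‖ = 1)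
    (hrow : ∀ j, Function.Periodic (fun i => S i j) n) (hn : 0 < n) (hnR : n < R) :
    R ≤ 2 * n := by
  have hnorm : ‖∑ j ∈ range C, xcorr R (fun i => S i j) (fun i => S i j) n
      - ∑ _j ∈ range C, ((R - n : ℕ) : ℂ)‖ ≤ ∑ _j ∈ range C, (n : ℝ) := by
    rw [← sum_sub_distrib]
    exact norm_sum_le_of_le _ fun j _ =>
      norm_xcorr_sub_le hnR.le (fun i => hS i j) fun i _ => hrow j i
  rw [h.2 n (Nat.not_dvd_of_pos_of_lt hn hnR), zero_sub, norm_neg, sum_const, sum_const,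
    card_range, nsmul_eq_mul, nsmul_eq_mul, norm_mul, Complex.norm_natCast,
    Complex.norm_natCast] at hnorm
  have := le_of_mul_le_mul_left hnorm (by exact_mod_cast hC)
  norm_cast at this
  omega

theorem dft_mul_conj_dft_eq_zero (h : AOP R C S) (hR : 0 < R) (hζ : IsPrimitiveRoot ζ R)
    {j₀ j₁ : ℕ} (hj₀ : j₀ < C) (hj₁ : j₁ < C) (hne : j₀ ≠ j₁) (t : ℕ) :
    dft R ζ (fun i => S i j₀) t * conj (dft R ζ (fun i => S i j₁) t) = 0 := by
  rw [← sum_conj_pow_mul_xcorr hR hζ.pow_eq_one (hζ.norm'_eq_one hR.ne')]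
  simp [h.1 _ _ _ hj₀ hj₁ hne]

theorem sum_dft_mul_conj_dft (h : AOP R C S) (hR : 0 < R) (hζ : IsPrimitiveRoot ζ R)
    (hS : ∀ i j, ‖S i j‖ = 1) (t : ℕ) :
    ∑ j ∈ range C, dft R ζ (fun i => S i j) t * conj (dft R ζ (fun i => S i j) t) = R * C := by
  simp_rw [← sum_conj_pow_mul_xcorr hR hζ.pow_eq_one (hζ.norm'_eq_one hR.ne')]
  rw [sum_comm, sum_eq_single_of_mem 0 (mem_range.mpr hR) fun τ hτ hτ0 => by
    rw [← mul_sum, h.2 τ fun hdvd => hτ0 (Nat.eq_zero_of_dvd_of_lt hdvd (mem_range.mp hτ)),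
      mul_zero]]
  simp_rw [pow_zero, map_one, one_mul]
  exact sum_xcorr_self_zero hS

theorem dft_mul_conj_dft_of_ne_zero (h : AOP R C S) (hR : 0 < R) (hζ : IsPrimitiveRoot ζ R)
    (hS : ∀ i j, ‖S i j‖ = 1) {j t : ℕ} (hj : j < C) (hF : dft R ζ (fun i => S i j) t ≠ 0) :
    dft R ζ (fun i => S i j) t * conj (dft R ζ (fun i => S i j) t) = R * C := by
  rw [← h.sum_dft_mul_conj_dft hR hζ hS t, sum_eq_single_of_mem j (mem_range.mpr hj)
    fun j' hj' hne => ?_]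
  have := h.dft_mul_conj_dft_eq_zero hR hζ hj (mem_range.mp hj') hne.symm t
  simp_all

theorem card_dft_ne_zero_mul (h : AOP R C S) (hR : 0 < R) (hζ : IsPrimitiveRoot ζ R)
    (hS : ∀ i j, ‖S i j‖ = 1) {j : ℕ} (hj : j < C) :
    #{t ∈ range R | dft R ζ (fun i => S i j) t ≠ 0} * C = R := by
  set F := dft R ζ (fun i => S i j)
  have hparseval : ∑ t ∈ range R, F t * conj (F t) = R * R := by
    rw [hζ.sum_dft_mul_conj_dft, sum_congr rfl fun i _ => by
      rw [Complex.mul_conj', hS, Complex.ofReal_one, one_pow]]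
    simp
  rw [← sum_filter_of_ne (p := fun t => F t ≠ 0) fun t _ hF => left_ne_zero_of_mul hF,
    sum_congr rfl fun t ht => h.dft_mul_conj_dft_of_ne_zero hR hζ hS hj (mem_filter.mp ht).2,
    sum_const, nsmul_eq_mul] at hparseval
  have : ((#{t ∈ range R | F t ≠ 0} * C : ℕ) : ℂ) = R :=
    mul_left_cancel₀ (Nat.cast_ne_zero.mpr hR.ne') (by push_cast; linear_combination hparseval)
  exact_mod_cast this

theorem exists_dft_ne_zero (h : AOP R C S) (hR : 0 < R) (hζ : IsPrimitiveRoot ζ R) (hC : 0 < C)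
    (hS : ∀ i j, ‖S i j‖ = 1) (t : ℕ) : ∃ j < C, dft R ζ (fun i => S i j) t ≠ 0 := by
  by_contra! h0
  have := h.sum_dft_mul_conj_dft hR hζ hS t
  rw [sum_eq_zero fun j hj => by rw [h0 j (mem_range.mp hj), zero_mul]] at this
  exact mul_ne_zero (Nat.cast_ne_zero.mpr hR.ne') (Nat.cast_ne_zero.mpr hC.ne') this.symm

theorem mul_sub_add_one_le (h : AOP R C S) (hC : 0 < C) (hS : ∀ i j, ‖S i j‖ = 1)
    (hrow : ∀ j, Function.Periodic (fun i => S i j) n) (hn : 0 < n) (hnR : n < R) :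
    C * (R - n + 1) ≤ R := by
  have hζ := Complex.isPrimitiveRoot_exp R (by omega)
  have hR : 0 < R := by omega
  obtain ⟨j, hj, hF⟩ := h.exists_dft_ne_zero hR hζ hC hS 1
  have hsupp := hζ.sub_lt_card_dft_ne_zero (fun i _ => hrow j i) (by omega) hF
    (by rw [pow_one, Ne, hζ.pow_eq_one_iff_dvd]; exact Nat.not_dvd_of_pos_of_lt hn hnR)
  calc C * (R - n + 1) ≤ C * #{t ∈ range R | dft R _ (fun i => S i j) t ≠ 0} :=
        Nat.mul_le_mul_left C hsupp
    _ = R := by rw [mul_comm, h.card_dft_ne_zero_mul hR hζ hS hj]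

end AOP

theorem mul_le_sq_of_lt_two_mul {R C n : ℕ} (hnR : n < R) (hR : R < 2 * n)
    (hCR : C * (R - n + 1) ≤ R) : R * C ≤ n ^ 2 := by
  obtain ⟨m, rfl⟩ : ∃ m, R = n + m := ⟨R - n, by omega⟩
  rw [Nat.add_sub_cancel_left] at hCR
  rcases Nat.lt_or_ge n 3 with hn | hn
  · have : m < 2 := by omega
    interval_cases n <;> interval_cases m <;> omega
  · have hsq : (n + m) * (n + m) ≤ n ^ 2 * (m + 1) := by
      have h3n : 2 * n + m ≤ n ^ 2 := by nlinarith
      nlinarith [Nat.mul_le_mul_left m h3n]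
    have : (n + m) * C * (m + 1) ≤ n ^ 2 * (m + 1) :=
      calc (n + m) * C * (m + 1) = (n + m) * (C * (m + 1)) := by ring
        _ ≤ (n + m) * (n + m) := Nat.mul_le_mul_left _ hCR
        _ ≤ n ^ 2 * (m + 1) := hsq
    exact Nat.le_of_mul_le_mul_right this (by omega)

theorem IsPrimitiveRoot.zpow_eval_eq_of_intCast_eq {K σ : Type*} [Field K] {ω : K} {n : ℕ}
    (hω : IsPrimitiveRoot ω n) (hn : n ≠ 0) (p : MvPolynomial σ ℤ) {x y : σ → ℤ}
    (hxy : ∀ k, (x k : ZMod n) = y k) : ω ^ MvPolynomial.eval x p = ω ^ MvPolynomial.eval y p := by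
  have hcast : ∀ z : σ → ℤ, ((MvPolynomial.eval z p : ℤ) : ZMod n)
      = MvPolynomial.eval₂ (Int.castRingHom (ZMod n)) (fun k => (z k : ZMod n)) p := fun z =>
    MvPolynomial.eval₂_comp_left (Int.castRingHom (ZMod n)) (RingHom.id ℤ) z p
  have hmod : ((MvPolynomial.eval x p : ℤ) : ZMod n) = MvPolynomial.eval y p := by
    rw [hcast, hcast, funext hxy]
  have h1 := (hω.zpow_eq_one_iff_dvd _).mpr ((ZMod.intCast_eq_intCast_iff_dvd_sub _ _ n).mp hmod)
  rw [zpow_sub₀ (hω.ne_zero hn), div_eq_one_iff_eq (zpow_ne_zero _ (hω.ne_zero hn))] at h1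
  exact h1.symm

/-- If the `R × C` array `S_{i,j} = ω^{p(i,j)}` (with `ω = e^{2πi/n}`, `p ∈ ℤ[x,y]`)
has the Array Orthogonality Property for divisor `C`, then `L = R·C ≤ n²`. -/
theorem aop_polynomial_length_bound (R C n : ℕ) (hR : 0 < R) (hC : 0 < C) (hn : 0 < n)
    (p : MvPolynomial (Fin 2) ℤ)
    (ω : ℂ) (hω : ω = Complex.exp (2 * Real.pi * Complex.I / n))
    (S : ℕ → ℕ → ℂ)
    (hS : ∀ i j : ℕ, S i j = ω ^ (MvPolynomial.eval ![(i : ℤ), (j : ℤ)] p))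
    (hAOP : AOP R C S) : R * C ≤ n ^ 2 := by
  have hωn : IsPrimitiveRoot ω n := hω ▸ Complex.isPrimitiveRoot_exp n hn.ne'
  have hunit : ∀ i j, ‖S i j‖ = 1 := fun i j => by
    rw [hS, norm_zpow, hωn.norm'_eq_one hn.ne', one_zpow]
  have hrow : ∀ j, Function.Periodic (fun i => S i j) n := fun j i => by
    simp only [hS]
    exact hωn.zpow_eval_eq_of_intCast_eq hn.ne' p fun k => by fin_cases k <;> simp
  have hcol : ∀ i, Function.Periodic (S i) n := fun i j => by
    simp only [hS]
    exact hωn.zpow_eval_eq_of_intCast_eq hn.ne' p fun k => by fin_cases k <;> simp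
  have hCn : C ≤ n := hAOP.cols_le_of_periodic hR hn hunit hcol
  rcases le_or_gt R n with hRn | hnR
  · calc R * C ≤ n * n := Nat.mul_le_mul hRn hCn
      _ = n ^ 2 := (sq n).symm
  have hR2n : R < 2 * n := lt_of_le_of_ne (hAOP.le_two_mul hC hunit hrow hn hnR)
    fun h => hAOP.not_dvd_of_lt hC hunit hrow hnR ⟨2, by omega⟩
  exact mul_le_sq_of_lt_two_mul hnR hR2n (hAOP.mul_sub_add_one_le hC hunit hrow hn hnR)
end
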